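/- arXiv:1907.05253 — 2 statements merged into one kernel-verified Lean document; each statement's English description precedes it below -/
import Mathlib

section
/- Let u : Ω → ℝ be smooth on a bounded open set Ω ⊂ ℝⁿ with |D²u| ≤ C₀, and for δ > 0 consider the averaged coarea quantity (1/δ)∫₀^δ (∫_{Ω ∩ {|∇u| = ε}} |∇u| dV) dε. Then this quantity is bounded by C(n)·C₀·|{x ∈ Ω : 0 < |∇u(x)| < δ}|, which tends to 0 as δ ↓ 0. -/
open MeasureTheory Set Filter EMetric
open scoped ENNReal NNReal Topology

lemma hausdorff_le_volume {n : ℕ} (S : Set (EuclideanSpace ℝ (Fin n))) (hS : MeasurableSet S) :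
    μH[(n:ℝ)] S ≤ (((n:ℝ≥0) ^ ((1:ℝ)/2) : ℝ≥0) : ℝ≥0∞) ^ (n:ℝ) * volume S := by
  have hanti : AntilipschitzWith ((n:ℝ≥0) ^ ((1:ℝ)/2))
      (WithLp.equiv 2 (Fin n → ℝ)) := by
    have := PiLp.antilipschitzWith_ofLp 2 (fun _ : Fin n => ℝ)
    simp at this ⊢
    exact this
  have h1 := hanti.le_hausdorffMeasure_image (d := (n:ℝ)) (n.cast_nonneg) S
  refine h1.trans ?_
  gcongr
  have h2 : (μH[(n:ℝ)] : Measure (Fin n → ℝ)) = volume := by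
    simpa using (hausdorffMeasure_pi_real (ι := Fin n))
  rw [h2]
  have him : (WithLp.equiv 2 (Fin n → ℝ)) '' S
      = (MeasurableEquiv.toLp 2 (Fin n → ℝ)).symm.symm ⁻¹' S := by
    ext x
    constructor
    · rintro ⟨y, hy, rfl⟩
      exact hy
    · intro hx
      exact ⟨_, hx, rfl⟩
  rw [him, MeasurePreserving.measure_preimage_equiv
    (MeasurePreserving.symm _ (EuclideanSpace.volume_preserving_symm_measurableEquiv_toLp (Fin n))) S]

lemma piece_majorant {X : Type*} [MetricSpace X] [MeasurableSpace X] [BorelSpace X]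
    (g : X → ℝ) (S : Set X) (L : ℝ≥0) (ρ : ℝ) (hρ : 0 < ρ)
    (hg : ∀ x ∈ S, ∀ y ∈ S, dist x y < ρ → dist (g x) (g y) ≤ L * dist x y)
    (d : ℝ) (hd : 0 ≤ d) (hS : μH[d + 1] S ≠ ∞) (η : ℝ≥0∞) (hη : 0 < η) :
    ∃ ψ : ℝ → ℝ≥0∞, Measurable ψ ∧ (∀ t : ℝ, μH[d] (S ∩ g ⁻¹' {t}) ≤ ψ t) ∧
      ∫⁻ t, ψ t ≤ 2 * L * (μH[d + 1] S + η) := by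
  classical
  -- step 1 : covers
  have hcov : ∀ k : ℕ, ∃ T : ℕ → Set X, (S ⊆ ⋃ i, T i) ∧
      (∀ i, diam (T i) ≤ ((k : ℝ≥0∞) + 1)⁻¹) ∧
      ∑' i, ⨆ _ : (T i).Nonempty, diam (T i) ^ (d + 1) ≤ μH[d + 1] S + η := by
    intro k
    have h1 : (⨅ (t : ℕ → Set X) (_ : S ⊆ ⋃ i, t i)
        (_ : ∀ i, diam (t i) ≤ ((k : ℝ≥0∞) + 1)⁻¹),
        ∑' i, ⨆ _ : (t i).Nonempty, diam (t i) ^ (d + 1)) ≤ μH[d + 1] S := by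
      rw [Measure.hausdorffMeasure_apply]
      refine le_iSup₂ (f := fun (r : ℝ≥0∞) (_ : 0 < r) =>
        ⨅ (t : ℕ → Set X) (_ : S ⊆ ⋃ i, t i) (_ : ∀ i, diam (t i) ≤ r),
          ∑' i, ⨆ _ : (t i).Nonempty, diam (t i) ^ (d + 1)) (((k : ℝ≥0∞) + 1)⁻¹) ?_
      exact ENNReal.inv_pos.mpr (by simp)
    have h2 := h1.trans_lt (ENNReal.lt_add_right hS hη.ne')
    obtain ⟨T, hT⟩ := iInf_lt_iff.mp h2
    obtain ⟨hT1, hT2⟩ := iInf_lt_iff.mp hT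
    obtain ⟨hT3, hT4⟩ := iInf_lt_iff.mp hT2
    exact ⟨T, hT1, hT3, hT4.le⟩
  choose T hTcov hTdiam hTsum using hcov
  -- step 2 : definitions
  set w : ℕ → ℕ → ℝ := fun k i => (L : ℝ) * (diam (T k i)).toReal with hw
  set J : ℕ → ℕ → Set ℝ := fun k i =>
    if h : (T k i ∩ S).Nonempty then
      Icc (g h.choose - w k i) (g h.choose + w k i) else ∅ with hJ
  have hJmeas : ∀ k i, MeasurableSet (J k i) := by
    intro k i
    by_cases h : (T k i ∩ S).Nonempty <;> simp [hJ, h]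
  set φ : ℕ → ℝ → ℝ≥0∞ :=
    fun k t => ∑' i, (J k i).indicator (fun _ => diam (T k i) ^ d) t with hφ
  have hφmeas : ∀ k, Measurable (φ k) := fun k =>
    Measurable.ennreal_tsum fun i => measurable_const.indicator (hJmeas k i)
  have hdiamfin : ∀ k i, diam (T k i) ≠ ∞ := by
    intro k i
    exact ((hTdiam k i).trans_lt (by simp [ENNReal.inv_lt_top])).ne
  -- step 3 : pointwise majorization
  have hmaj : ∀ t : ℝ, μH[d] (S ∩ g ⁻¹' {t}) ≤ atTop.liminf fun k => φ k t := by
    intro t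
    rw [Measure.hausdorffMeasure_apply]
    refine iSup₂_le fun r hr => ?_
    obtain ⟨k₁, hk₁⟩ : ∃ k₁ : ℕ, (k₁ : ℝ≥0∞)⁻¹ < r := ENNReal.exists_inv_nat_lt hr.ne'
    obtain ⟨k₂, hk₂⟩ : ∃ k₂ : ℕ, 1 / ((k₂ : ℝ) + 1) < ρ := exists_nat_one_div_lt hρ
    set k₀ := max k₁ k₂ with hk₀
    have key : ∀ k ≥ k₀,
        (⨅ (t' : ℕ → Set X) (_ : S ∩ g ⁻¹' {t} ⊆ ⋃ i, t' i) (_ : ∀ i, diam (t' i) ≤ r),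
          ∑' i, ⨆ _ : (t' i).Nonempty, diam (t' i) ^ d) ≤ φ k t := by
      intro k hk
      set F : ℕ → Set X := fun i => T k i ∩ S ∩ g ⁻¹' {t} with hF
      have hFsub : ∀ i, F i ⊆ T k i := fun i x hx => hx.1.1
      have hFcov : S ∩ g ⁻¹' {t} ⊆ ⋃ i, F i := by
        rintro x ⟨hxS, hxt⟩
        obtain ⟨i, hi⟩ := mem_iUnion.mp (hTcov k hxS)
        exact mem_iUnion.mpr ⟨i, ⟨hi, hxS⟩, hxt⟩
      have hkr : ((k : ℝ≥0∞) + 1)⁻¹ ≤ r := by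
        refine le_trans ?_ hk₁.le
        refine ENNReal.inv_le_inv.mpr ?_
        exact_mod_cast le_trans (Nat.cast_le.mpr (le_trans (le_max_left k₁ k₂) hk))
          (le_add_of_nonneg_right zero_le_one)
      have hFdiam : ∀ i, diam (F i) ≤ r := fun i =>
        le_trans (diam_mono (hFsub i)) ((hTdiam k i).trans hkr)
      refine le_trans
        (le_trans (iInf_le _ F) (le_trans (iInf_le _ hFcov) (iInf_le _ hFdiam)))
        (ENNReal.tsum_le_tsum (fun i => ?_))
      by_cases hne : (F i).Nonempty
      · simp only [hne, ciSup_pos]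
        have hTS : (T k i ∩ S).Nonempty := hne.imp fun x hx => hx.1
        obtain ⟨y, hy⟩ := hne
        have hc := hTS.choose_spec
        have hyc : dist y hTS.choose ≤ (diam (T k i)).toReal := by
          rw [dist_edist]
          exact ENNReal.toReal_mono (hdiamfin k i) (edist_le_diam_of_mem hy.1.1 hc.1)
        have hdiam_real : (diam (T k i)).toReal ≤ 1 / ((k : ℝ) + 1) := by
          rw [one_div, ← ENNReal.toReal_ofReal (by positivity : (0:ℝ) ≤ ((k:ℝ)+1)⁻¹)]
          refine ENNReal.toReal_mono (by simp) ?_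
          refine (hTdiam k i).trans ?_
          rw [ENNReal.ofReal_inv_of_pos (by positivity)]
          refine ENNReal.inv_le_inv.mpr ?_
          rw [ENNReal.ofReal_add (by positivity) zero_le_one]
          simp
        have hycρ : dist y hTS.choose < ρ := by
          refine lt_of_le_of_lt (hyc.trans hdiam_real) (lt_of_le_of_lt ?_ hk₂)
          have : ((k₂ : ℝ) + 1) ≤ ((k : ℝ) + 1) := by
            have := le_trans (le_max_right k₁ k₂) hk
            exact_mod_cast by linarith [(Nat.cast_le (α := ℝ)).mpr this]
          gcongr
        have hgyc : dist (g y) (g hTS.choose) ≤ (L : ℝ) * dist y hTS.choose :=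
          hg y hy.1.2 hTS.choose hc.2 hycρ
        have hgt : g y = t := hy.2
        have htJ : t ∈ J k i := by
          rw [hJ]
          simp only [dif_pos hTS]
          have : |t - g hTS.choose| ≤ w k i := by
            rw [← hgt, ← Real.dist_eq]
            refine hgyc.trans ?_
            rw [hw]
            exact mul_le_mul_of_nonneg_left hyc L.coe_nonneg
          rw [abs_le] at this
          rw [Set.mem_Icc]
          constructor <;> linarith [this.1, this.2]
        rw [indicator_of_mem htJ]
        exact ENNReal.rpow_le_rpow (diam_mono (hFsub i)) hd
      · simp [hne]
    have heq : (⨅ (t' : ℕ → Set X) (_ : S ∩ g ⁻¹' {t} ⊆ ⋃ i, t' i)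
        (_ : ∀ i, diam (t' i) ≤ r), ∑' i, ⨆ _ : (t' i).Nonempty, diam (t' i) ^ d)
        = atTop.liminf (fun _ : ℕ => (⨅ (t' : ℕ → Set X) (_ : S ∩ g ⁻¹' {t} ⊆ ⋃ i, t' i)
        (_ : ∀ i, diam (t' i) ≤ r), ∑' i, ⨆ _ : (t' i).Nonempty, diam (t' i) ^ d)) :=
      (liminf_const _).symm
    refine (le_of_eq heq).trans ?_
    exact liminf_le_liminf (eventually_atTop.mpr ⟨k₀, key⟩)
  -- step 4 : the majorant and its integral
  refine ⟨fun t => atTop.liminf fun k => φ k t, Measurable.liminf hφmeas, hmaj, ?_⟩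
  have hint : ∀ k, ∫⁻ t, φ k t ≤ 2 * L * (μH[d + 1] S + η) := by
    intro k
    rw [hφ]
    simp only []
    rw [lintegral_tsum (fun i => (measurable_const.indicator (hJmeas k i)).aemeasurable)]
    have hterm : ∀ i, ∫⁻ t, (J k i).indicator (fun _ => diam (T k i) ^ d) t
        ≤ 2 * L * ⨆ _ : (T k i).Nonempty, diam (T k i) ^ (d + 1) := by
      intro i
      rw [lintegral_indicator (hJmeas k i), setLIntegral_const]
      by_cases h : (T k i ∩ S).Nonempty
      · have hTne : (T k i).Nonempty := h.imp fun x hx => hx.1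
        rw [hJ]
        simp only [dif_pos h, Real.volume_Icc]
        have harith : (g h.choose + w k i) - (g h.choose - w k i) = 2 * w k i := by ring
        rw [harith, ciSup_pos hTne]
        rw [hw]
        simp only []
        rw [ENNReal.ofReal_mul (by norm_num : (0:ℝ) ≤ 2),
          ENNReal.ofReal_mul L.coe_nonneg, ENNReal.ofReal_coe_nnreal,
          ENNReal.ofReal_toReal (hdiamfin k i)]
        rw [ENNReal.rpow_add_of_nonneg d 1 hd zero_le_one, ENNReal.rpow_one]
        rw [ENNReal.ofReal_ofNat]
        ring_nf
        exact le_of_eq (by ring)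
      · rw [hJ]
        simp [dif_neg h]
    refine le_trans (ENNReal.tsum_le_tsum hterm) ?_
    rw [ENNReal.tsum_mul_left]
    exact mul_le_mul_right (hTsum k) _
  refine le_trans (lintegral_liminf_le hφmeas) ?_
  refine le_trans (liminf_le_liminf (Eventually.of_forall hint)) ?_
  simp [liminf_const]

lemma aux_eps {X c v : ℝ≥0∞} (hc : c ≠ ∞) (hv : v ≠ ∞)
    (h : ∀ η : ℝ≥0∞, 0 < η → η ≠ ∞ → X ≤ c * (v + η)) : X ≤ c * v := by
  rcases eq_or_ne c 0 with rfl | hc0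
  · simpa using h 1 one_pos ENNReal.one_ne_top
  refine ENNReal.le_of_forall_pos_le_add fun ε hε _ => ?_
  have hεc : (0:ℝ≥0∞) < ε / c := ENNReal.div_pos (by exact_mod_cast hε.ne') hc
  have hεc' : (ε : ℝ≥0∞) / c ≠ ∞ := (ENNReal.div_lt_top ENNReal.coe_ne_top hc0).ne
  refine (h (ε / c) hεc hεc').trans ?_
  rw [mul_add, ENNReal.mul_div_cancel' (fun h => absurd h hc0) (fun h => absurd h hc)]

open MeasureTheory

/-- Averaged level-set integral bound: if `u` is smooth on a bounded open set
with `|D²u| ≤ C₀`, then `(1/δ)∫₀^δ ∫_{Ω∩{|∇u|=ε}} |∇u| dV dε ≤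
C(n) C₀ |{0 < |∇u| < δ}|`, and the right-hand side tends to `0` as `δ ↓ 0`. -/
theorem averaged_level_set_integral_bound (n : ℕ) :
    ∃ C : ℝ, 0 < C ∧
      ∀ (Ω : Set (EuclideanSpace ℝ (Fin n))) (u : EuclideanSpace ℝ (Fin n) → ℝ)
        (C₀ : ℝ), IsOpen Ω → Bornology.IsBounded Ω → ContDiff ℝ (⊤ : ℕ∞) u →
        (∀ x ∈ Ω, ‖fderiv ℝ (gradient u) x‖ ≤ C₀) →
        (∀ δ : ℝ, 0 < δ →
          (1 / δ) *
              ∫ ε in Set.Ioo (0 : ℝ) δ,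
                ∫ x in {y ∈ Ω | ‖gradient u y‖ = ε}, ‖gradient u x‖
                  ∂(μH[((n : ℝ) - 1)])
            ≤ C * C₀ *
              (volume {x ∈ Ω | 0 < ‖gradient u x‖ ∧ ‖gradient u x‖ < δ}).toReal) ∧
        Filter.Tendsto
          (fun δ : ℝ =>
            C * C₀ *
              (volume {x ∈ Ω | 0 < ‖gradient u x‖ ∧ ‖gradient u x‖ < δ}).toReal)
          (nhdsWithin 0 (Set.Ioi 0)) (nhds 0) := by
  classical
  refine ⟨2 * (Real.sqrt n + 1) ^ n + 1, by positivity,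
    fun Ω u C₀ hΩo hΩb hu hC₀ => ?_⟩
  set Cst : ℝ := 2 * (Real.sqrt n + 1) ^ n + 1 with hCst
  have hCstpos : 0 < Cst := by positivity
  set G : EuclideanSpace ℝ (Fin n) → EuclideanSpace ℝ (Fin n) := gradient u with hG
  have hGcd : ContDiff ℝ (⊤ : ℕ∞) G := by
    have h1 : ContDiff ℝ (⊤ : ℕ∞) (fderiv ℝ u) := hu.fderiv_right (by simp)
    have h2 : G = fun x => (InnerProductSpace.toDual ℝ
        (EuclideanSpace ℝ (Fin n))).symm (fderiv ℝ u x) := rfl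
    rw [h2]
    exact (LinearIsometryEquiv.contDiff _).comp h1
  have hGc : Continuous G := hGcd.continuous
  have hgc : Continuous fun x => ‖G x‖ := hGc.norm
  set A : ℝ → Set (EuclideanSpace ℝ (Fin n)) :=
    fun δ => {x ∈ Ω | 0 < ‖G x‖ ∧ ‖G x‖ < δ} with hA
  have hAeq : ∀ δ, A δ = Ω ∩ ({x | 0 < ‖G x‖} ∩ {x | ‖G x‖ < δ}) := by
    intro δ; rfl
  have hAmeas : ∀ δ, MeasurableSet (A δ) := by
    intro δ
    rw [hAeq]
    exact hΩo.measurableSet.inter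
      ((measurableSet_lt measurable_const hgc.measurable).inter
        (measurableSet_lt hgc.measurable measurable_const))
  have hAsub : ∀ δ, A δ ⊆ Ω := fun δ => sep_subset _ _
  have hAfin : ∀ δ, volume (A δ) ≠ ∞ :=
    fun δ => ((measure_mono (hAsub δ)).trans_lt hΩb.measure_lt_top).ne
  constructor
  · -- main bound
    intro δ hδ
    by_cases hΩe : Ω = ∅
    · have hΓ : ∀ ε : ℝ, {y ∈ Ω | ‖G y‖ = ε} = ∅ := by
        intro ε; rw [hΩe]; ext y; simp
      have hA0 : A δ = ∅ := by rw [hAeq, hΩe]; simp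
      have : ∀ ε : ℝ, (∫ x in {y ∈ Ω | ‖gradient u y‖ = ε}, ‖gradient u x‖
          ∂(μH[((n : ℝ) - 1)])) = 0 := by
        intro ε
        rw [show {y ∈ Ω | ‖gradient u y‖ = ε} = ∅ from hΓ ε]
        simp
      simp only [this, integral_zero, mul_zero]
      rw [show {x ∈ Ω | 0 < ‖gradient u x‖ ∧ ‖gradient u x‖ < δ} = ∅ from hA0]
      simp [hΓ]
    have hΩne : Ω.Nonempty := Set.nonempty_iff_ne_empty.mpr hΩe
    have hC₀0 : 0 ≤ C₀ := by
      obtain ⟨x, hx⟩ := hΩne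
      exact (norm_nonneg _).trans (hC₀ x hx)
    by_cases hn : n = 0
    · subst hn
      have hg0 : ∀ y : EuclideanSpace ℝ (Fin 0), ‖G y‖ = 0 := fun y => by
        rw [Subsingleton.elim (G y) 0, norm_zero]
      have hf0 : EqOn (fun ε : ℝ => ∫ x in {y ∈ Ω | ‖G y‖ = ε}, ‖G x‖
          ∂(μH[((0:ℕ):ℝ)-1])) (fun _ => (0:ℝ)) (Ioo (0:ℝ) δ) := by
        intro ε hε
        have hempty : {y ∈ Ω | ‖G y‖ = ε} = ∅ := by
          ext y
          simp only [Set.mem_setOf_eq, Set.mem_empty_iff_false, iff_false, not_and]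
          intro _
          rw [hg0]
          exact fun h => absurd h.symm (ne_of_gt hε.1)
        simp only [hempty, Measure.restrict_empty, integral_zero_measure]
      rw [setIntegral_congr_fun measurableSet_Ioo hf0]
      have hA0 : A δ = ∅ := by
        ext x
        simp only [hA, Set.mem_setOf_eq, Set.mem_empty_iff_false, iff_false, not_and]
        intro _ h
        rw [hg0] at h
        exact absurd h (lt_irrefl 0)
      rw [show {x ∈ Ω | 0 < ‖G x‖ ∧ ‖G x‖ < δ} = (∅ : Set (EuclideanSpace ℝ (Fin 0)))
        from hA0]
      simp
    -- main case : n ≥ 1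
    have hn1 : (1:ℝ) ≤ (n:ℝ) := by exact_mod_cast Nat.one_le_iff_ne_zero.mpr hn
    have hd0 : (0:ℝ) ≤ (n:ℝ) - 1 := by linarith
    set L : ℝ≥0 := C₀.toNNReal with hL
    have hLr : (L:ℝ) = C₀ := Real.coe_toNNReal _ hC₀0
    have hGdiff : Differentiable ℝ G := hGcd.differentiable (by simp)
    have hlip : ∀ (c : EuclideanSpace ℝ (Fin n)) (r : ℝ), Metric.ball c r ⊆ Ω →
        ∀ p ∈ Metric.ball c r, ∀ q ∈ Metric.ball c r,
          dist ‖G p‖ ‖G q‖ ≤ (L:ℝ) * dist p q := by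
      intro c r hsubΩ p hp q hq
      have hmv : ‖G p - G q‖ ≤ C₀ * ‖p - q‖ :=
        Convex.norm_image_sub_le_of_norm_fderiv_le
          (fun z _ => hGdiff z) (fun z hz => hC₀ z (hsubΩ hz)) (convex_ball c r) hq hp
      have h1 : dist ‖G p‖ ‖G q‖ ≤ ‖G p - G q‖ := by
        rw [Real.dist_eq]
        exact abs_norm_sub_norm_le _ _
      rw [hLr, dist_eq_norm]
      exact h1.trans hmv
    -- the pieces
    have hΩcne : Ωᶜ.Nonempty := by
      rw [Set.nonempty_iff_ne_empty]
      intro h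
      rw [compl_empty_iff] at h
      rw [h] at hΩb
      haveI : Nontrivial (EuclideanSpace ℝ (Fin n)) := by
        refine ⟨0, EuclideanSpace.single ⟨0, by omega⟩ 1, fun hcontra => ?_⟩
        have := congrArg (fun v : EuclideanSpace ℝ (Fin n) => v ⟨0, by omega⟩) hcontra
        simpa using this
      exact NormedSpace.unbounded_univ ℝ (EuclideanSpace ℝ (Fin n)) hΩb
    set Om : ℕ → Set (EuclideanSpace ℝ (Fin n)) :=
      fun m => {x ∈ Ω | 1 / ((m:ℝ) + 1) < Metric.infDist x Ωᶜ} with hOm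
    have hOmmeas : ∀ m, MeasurableSet (Om m) := by
      intro m
      have : Om m = Ω ∩ (fun x => Metric.infDist x Ωᶜ) ⁻¹' (Ioi (1 / ((m:ℝ) + 1))) := rfl
      rw [this]
      exact hΩo.measurableSet.inter
        ((Metric.continuous_infDist_pt Ωᶜ).measurable measurableSet_Ioi)
    have hOmmono : Monotone Om := by
      intro a b hab x hx
      refine ⟨hx.1, lt_of_le_of_lt ?_ hx.2⟩
      have hcast : ((a:ℝ)) + 1 ≤ (b:ℝ) + 1 := by
        have := (Nat.cast_le (α := ℝ)).mpr hab; linarith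
      exact one_div_le_one_div_of_le (by positivity) hcast
    have hOmunion : (⋃ m, Om m) = Ω := by
      apply Set.Subset.antisymm
      · exact Set.iUnion_subset fun m => sep_subset _ _
      · intro x hx
        have hpos : 0 < Metric.infDist x Ωᶜ :=
          (IsClosed.notMem_iff_infDist_pos hΩo.isClosed_compl hΩcne).mp
            (by simpa using hx)
        obtain ⟨m, hm⟩ := exists_nat_one_div_lt hpos
        exact Set.mem_iUnion.mpr ⟨m, hx, hm⟩
    have hball : ∀ m, ∀ x ∈ Om m, Metric.ball x (1 / ((m:ℝ) + 1)) ⊆ Ω := by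
      intro m x hx z hz
      by_contra hzc
      have h1 : Metric.infDist x Ωᶜ ≤ dist x z :=
        Metric.infDist_le_dist_of_mem (s := Ωᶜ) hzc
      have h2 : dist x z < 1 / ((m:ℝ) + 1) := by rwa [Metric.mem_ball, dist_comm] at hz
      exact absurd h1 (not_le.mpr (h2.trans hx.2))
    set D : ℕ → Set (EuclideanSpace ℝ (Fin n)) :=
      fun m => A δ ∩ disjointed Om m with hD
    have hDmeas : ∀ m, MeasurableSet (D m) :=
      fun m => (hAmeas δ).inter (MeasurableSet.disjointed hOmmeas m)
    have hDdisj : Pairwise (Function.onFun Disjoint D) := by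
      intro a b hab
      exact Set.disjoint_of_subset inter_subset_right inter_subset_right
        (disjoint_disjointed Om hab)
    have hDunion : (⋃ m, D m) = A δ := by
      rw [hD]
      rw [← Set.inter_iUnion]
      rw [iUnion_disjointed, hOmunion]
      exact Set.inter_eq_self_of_subset_left (hAsub δ)
    have hDsub : ∀ m, D m ⊆ Om m :=
      fun m => inter_subset_right.trans (disjointed_subset _ _)
    have hDlip : ∀ m, ∀ x ∈ D m, ∀ y ∈ D m, dist x y < 1 / ((m:ℝ) + 1) →
        dist ‖G x‖ ‖G y‖ ≤ (L:ℝ) * dist x y := by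
      intro m x hx y hy hxy
      have hb := hball m x (hDsub m hx)
      exact hlip x (1 / ((m:ℝ) + 1)) hb x
        (Metric.mem_ball_self (by positivity)) y
        (by rwa [Metric.mem_ball, dist_comm])
    set Kc : ℝ≥0∞ := (((n:ℝ≥0) ^ ((1:ℝ)/2) : ℝ≥0) : ℝ≥0∞) ^ (n:ℝ) with hKc
    have hKcfin : Kc ≠ ∞ :=
      ENNReal.rpow_ne_top_of_nonneg (by positivity) ENNReal.coe_ne_top
    have hHfin : ∀ m : ℕ, μH[(n:ℝ)] (D m) ≠ ∞ := by
      intro m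
      refine ne_top_of_le_ne_top ?_ (hausdorff_le_volume (D m) (hDmeas m))
      exact ENNReal.mul_ne_top hKcfin
        (((measure_mono (inter_subset_left.trans (hAsub δ))).trans_lt
          hΩb.measure_lt_top).ne)
    -- Eilenberg-type inequality
    have hEil : ∀ η : ℝ≥0∞, 0 < η → η ≠ ∞ →
        (∫⁻ ε in Ioo (0:ℝ) δ, μH[(n:ℝ)-1] (A δ ∩ (fun x => ‖G x‖) ⁻¹' {ε}))
          ≤ 2 * (L:ℝ≥0∞) * (Kc * volume (A δ) + η) := by
      intro η hη hηfin
      have hpiece : ∀ m : ℕ, ∃ ψ : ℝ → ℝ≥0∞, Measurable ψ ∧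
          (∀ t, μH[(n:ℝ)-1] (D m ∩ (fun x => ‖G x‖) ⁻¹' {t}) ≤ ψ t) ∧
          ∫⁻ t, ψ t ≤ 2 * (L:ℝ≥0∞) * (μH[(n:ℝ)] (D m) + η * 2⁻¹ ^ (m+1)) := by
        intro m
        have hd1 : ((n:ℝ) - 1) + 1 = (n:ℝ) := by ring
        have hημ : (0:ℝ≥0∞) < η * 2⁻¹ ^ (m+1) := by
          refine ENNReal.mul_pos hη.ne' ?_
          exact (ENNReal.pow_pos (by simp) _).ne'
        have := piece_majorant (fun x => ‖G x‖) (D m) L (1 / ((m:ℝ) + 1))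
          (by positivity) (hDlip m) ((n:ℝ) - 1) hd0 (by rw [hd1]; exact hHfin m)
          (η * 2⁻¹ ^ (m+1)) hημ
        rwa [hd1] at this
      choose ψ hψmeas hψmaj hψint using hpiece
      have hpoint : ∀ ε : ℝ,
          μH[(n:ℝ)-1] (A δ ∩ (fun x => ‖G x‖) ⁻¹' {ε}) ≤ ∑' m, ψ m ε := by
        intro ε
        have hsplit : A δ ∩ (fun x => ‖G x‖) ⁻¹' {ε}
            = ⋃ m, (D m ∩ (fun x => ‖G x‖) ⁻¹' {ε}) := by
          rw [← Set.iUnion_inter, hDunion]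
        rw [hsplit]
        exact le_trans (measure_iUnion_le _) (ENNReal.tsum_le_tsum fun m => hψmaj m ε)
      have hgeo : (∑' m : ℕ, (2⁻¹ : ℝ≥0∞) ^ (m+1)) = 1 := by
        have h1 : (∑' m : ℕ, (2⁻¹ : ℝ≥0∞) ^ (m+1))
            = ∑' m : ℕ, (2⁻¹ : ℝ≥0∞) ^ m * 2⁻¹ := by
          congr 1
          funext m
          rw [pow_succ]
        rw [h1, ENNReal.tsum_mul_right, ENNReal.tsum_geometric,
          ENNReal.one_sub_inv_two, inv_inv, ENNReal.mul_inv_cancel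
          (by simp) (by simp)]
      calc ∫⁻ ε in Ioo (0:ℝ) δ, μH[(n:ℝ)-1] (A δ ∩ (fun x => ‖G x‖) ⁻¹' {ε})
          ≤ ∫⁻ ε in Ioo (0:ℝ) δ, ∑' m, ψ m ε := lintegral_mono hpoint
        _ ≤ ∫⁻ ε, ∑' m, ψ m ε := lintegral_mono' Measure.restrict_le_self le_rfl
        _ = ∑' m, ∫⁻ ε, ψ m ε := lintegral_tsum fun m => (hψmeas m).aemeasurable
        _ ≤ ∑' m, 2 * (L:ℝ≥0∞) * (μH[(n:ℝ)] (D m) + η * 2⁻¹ ^ (m+1)) :=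
            ENNReal.tsum_le_tsum hψint
        _ = 2 * (L:ℝ≥0∞) * ((∑' m, μH[(n:ℝ)] (D m)) + η * ∑' m, (2⁻¹:ℝ≥0∞) ^ (m+1)) := by
            rw [ENNReal.tsum_mul_left, ENNReal.tsum_add, ENNReal.tsum_mul_left]
        _ ≤ 2 * (L:ℝ≥0∞) * (Kc * volume (A δ) + η) := by
            refine mul_le_mul_right (add_le_add ?_ ?_) _
            · have hsum : (∑' m, μH[(n:ℝ)] (D m)) = μH[(n:ℝ)] (A δ) := by
                rw [← measure_iUnion hDdisj hDmeas, hDunion]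
              rw [hsum]
              exact hausdorff_le_volume (A δ) (hAmeas δ)
            · rw [hgeo, mul_one]
    -- assembly
    set μ : Measure (EuclideanSpace ℝ (Fin n)) := μH[(n:ℝ)-1] with hμ
    set f : ℝ → ℝ := fun ε => ∫ x in {y ∈ Ω | ‖G y‖ = ε}, ‖G x‖ ∂μ with hf
    have hΓmeas : ∀ ε : ℝ, MeasurableSet {y ∈ Ω | ‖G y‖ = ε} := by
      intro ε
      have h : {y ∈ Ω | ‖G y‖ = ε} = Ω ∩ (fun x => ‖G x‖) ⁻¹' {ε} := rfl
      rw [h]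
      exact hΩo.measurableSet.inter (hgc.measurable (measurableSet_singleton ε))
    have hfeq : ∀ ε : ℝ, f ε = (μ {y ∈ Ω | ‖G y‖ = ε}).toReal * ε := by
      intro ε
      rw [hf]
      simp only []
      rw [setIntegral_congr_fun (g := fun _ => ε) (hΓmeas ε) (fun y hy => hy.2),
        setIntegral_const, smul_eq_mul]
      rfl
    have hfnn : ∀ ε, 0 ≤ f ε := fun ε => integral_nonneg fun x => norm_nonneg _
    have hΓsub : ∀ ε ∈ Ioo (0:ℝ) δ,
        {y ∈ Ω | ‖G y‖ = ε} = A δ ∩ (fun x => ‖G x‖) ⁻¹' {ε} := by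
      intro ε hε
      ext y
      simp only [Set.mem_setOf_eq, Set.mem_inter_iff, Set.mem_preimage,
        Set.mem_singleton_iff, hA]
      constructor
      · rintro ⟨h1, h2⟩
        exact ⟨⟨h1, h2 ▸ hε.1, h2 ▸ hε.2⟩, h2⟩
      · rintro ⟨⟨h1, _⟩, h2⟩
        exact ⟨h1, h2⟩
    have hXle : (∫⁻ ε in Ioo (0:ℝ) δ, ENNReal.ofReal (f ε))
        ≤ ENNReal.ofReal δ * (2 * (L:ℝ≥0∞) * (Kc * volume (A δ))) := by
      have hstep1 : (∫⁻ ε in Ioo (0:ℝ) δ, ENNReal.ofReal (f ε))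
          ≤ ∫⁻ ε in Ioo (0:ℝ) δ,
              ENNReal.ofReal δ * μ (A δ ∩ (fun x => ‖G x‖) ⁻¹' {ε}) := by
        refine lintegral_mono_ae ((ae_restrict_iff' measurableSet_Ioo).mpr
          (ae_of_all _ fun ε hε => ?_))
        rw [hfeq, hΓsub ε hε]
        by_cases hfin : μ (A δ ∩ (fun x => ‖G x‖) ⁻¹' {ε}) = ∞
        · rw [hfin]
          simp only [ENNReal.toReal_top, zero_mul, ENNReal.ofReal_zero]
          exact zero_le
        · rw [ENNReal.ofReal_mul ENNReal.toReal_nonneg, ENNReal.ofReal_toReal hfin,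
            mul_comm]
          exact mul_le_mul_left (ENNReal.ofReal_le_ofReal hε.2.le) _
      refine hstep1.trans ?_
      rw [lintegral_const_mul' _ _ ENNReal.ofReal_ne_top]
      refine mul_le_mul_right ?_ _
      exact aux_eps (ENNReal.mul_ne_top (by simp) ENNReal.coe_ne_top)
        (ENNReal.mul_ne_top hKcfin (hAfin δ)) hEil
    have hKctr : Kc.toReal ≤ (Real.sqrt n + 1) ^ n := by
      rw [hKc, ← ENNReal.toReal_rpow, ENNReal.coe_toReal, NNReal.coe_rpow,
        NNReal.coe_natCast, ← Real.sqrt_eq_rpow, Real.rpow_natCast]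
      exact pow_le_pow_left₀ (Real.sqrt_nonneg _) (by linarith) n
    by_cases hIf : Integrable f (volume.restrict (Ioo (0:ℝ) δ))
    · have heq2 : ∫ ε in Ioo (0:ℝ) δ, f ε
          = (∫⁻ ε in Ioo (0:ℝ) δ, ENNReal.ofReal (f ε)).toReal :=
        integral_eq_lintegral_of_nonneg_ae (ae_of_all _ hfnn) hIf.1
      have hYfin : ENNReal.ofReal δ * (2 * (L:ℝ≥0∞) * (Kc * volume (A δ))) ≠ ∞ :=
        ENNReal.mul_ne_top ENNReal.ofReal_ne_top
          (ENNReal.mul_ne_top (ENNReal.mul_ne_top (by simp) ENNReal.coe_ne_top)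
            (ENNReal.mul_ne_top hKcfin (hAfin δ)))
      have h5 : (∫⁻ ε in Ioo (0:ℝ) δ, ENNReal.ofReal (f ε)).toReal
          ≤ (ENNReal.ofReal δ * (2 * (L:ℝ≥0∞) * (Kc * volume (A δ)))).toReal :=
        ENNReal.toReal_mono hYfin hXle
      have h6 : (ENNReal.ofReal δ * (2 * (L:ℝ≥0∞) * (Kc * volume (A δ)))).toReal
          = δ * (2 * C₀ * (Kc.toReal * (volume (A δ)).toReal)) := by
        rw [ENNReal.toReal_mul, ENNReal.toReal_ofReal hδ.le, ENNReal.toReal_mul,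
          ENNReal.toReal_mul, ENNReal.toReal_mul]
        simp only [ENNReal.toReal_ofNat, ENNReal.coe_toReal, hLr]
      calc (1/δ) * ∫ ε in Ioo (0:ℝ) δ, f ε
          ≤ (1/δ) * (δ * (2 * C₀ * (Kc.toReal * (volume (A δ)).toReal))) := by
            rw [heq2]
            exact mul_le_mul_of_nonneg_left (h5.trans_eq h6) (by positivity)
        _ = 2 * C₀ * (Kc.toReal * (volume (A δ)).toReal) := by
            field_simp
        _ ≤ Cst * C₀ * (volume (A δ)).toReal := by
            have hvnn : (0:ℝ) ≤ (volume (A δ)).toReal := ENNReal.toReal_nonneg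
            have hKnn : (0:ℝ) ≤ Kc.toReal := ENNReal.toReal_nonneg
            have hpow : (0:ℝ) ≤ (Real.sqrt n + 1) ^ n := by positivity
            rw [hCst]
            nlinarith [mul_nonneg hC₀0 hvnn, mul_le_mul_of_nonneg_right hKctr hvnn]
    · rw [integral_undef hIf, mul_zero]
      exact mul_nonneg (mul_nonneg hCstpos.le hC₀0) ENNReal.toReal_nonneg
  · -- tendsto
    have hseq0 : Tendsto (fun k : ℕ => volume (A (1 / ((k:ℝ) + 1)))) atTop (𝓝 0) := by
      have hanti : Antitone fun k : ℕ => A (1 / ((k:ℝ) + 1)) := by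
        intro a b hab x hx
        refine ⟨hx.1, hx.2.1, hx.2.2.trans_le ?_⟩
        have hcast : ((a:ℝ)) + 1 ≤ (b:ℝ) + 1 := by
          have := (Nat.cast_le (α := ℝ)).mpr hab; linarith
        exact one_div_le_one_div_of_le (by positivity) hcast
      have hint : (⋂ k : ℕ, A (1 / ((k:ℝ) + 1))) = ∅ := by
        ext x
        simp only [Set.mem_iInter, Set.mem_empty_iff_false, iff_false, not_forall]
        by_contra h
        push_neg at h
        obtain ⟨k, hk⟩ := exists_nat_one_div_lt (h 0).2.1
        exact absurd (h k).2.2 (not_lt.mpr hk.le)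
      have := tendsto_measure_iInter_atTop
        (fun k => (hAmeas _).nullMeasurableSet) hanti ⟨0, hAfin _⟩
      rw [hint] at this
      simpa [Function.comp_def] using this
    rw [Metric.tendsto_nhdsWithin_nhds]
    intro ε' hε'
    have hM : (0:ℝ) < |Cst * C₀| + 1 := by positivity
    rw [ENNReal.tendsto_atTop_zero] at hseq0
    obtain ⟨k, hk⟩ := hseq0 (ENNReal.ofReal (ε' / (2 * (|Cst * C₀| + 1))))
      (ENNReal.ofReal_pos.mpr (by positivity))
    refine ⟨1 / ((k:ℝ) + 1), by positivity, ?_⟩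
    intro x hx hdist
    rw [Real.dist_eq, sub_zero] at hdist ⊢
    have hxpos : (0:ℝ) < x := hx
    have hsub : A x ⊆ A (1 / ((k:ℝ) + 1)) := by
      intro y hy
      exact ⟨hy.1, hy.2.1, hy.2.2.trans (by rwa [abs_of_pos hxpos] at hdist)⟩
    have hvol : (volume (A x)).toReal ≤ ε' / (2 * (|Cst * C₀| + 1)) :=
      ENNReal.toReal_le_of_le_ofReal (by positivity)
        ((measure_mono hsub).trans (hk k le_rfl))
    have h1 : |Cst * C₀ * (volume (A x)).toReal|
        = |Cst * C₀| * (volume (A x)).toReal := by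
      rw [abs_mul, abs_of_nonneg ENNReal.toReal_nonneg]
    rw [h1]
    have h2 : |Cst * C₀| * (volume (A x)).toReal
        ≤ (|Cst * C₀| + 1) * (ε' / (2 * (|Cst * C₀| + 1))) := by
      exact mul_le_mul (by linarith) hvol ENNReal.toReal_nonneg (by positivity)
    have h3 : (|Cst * C₀| + 1) * (ε' / (2 * (|Cst * C₀| + 1))) = ε' / 2 := by
      field_simp
    linarith
end

section
/- Key identity for the gradient of a semilinear solution: if u is a smooth solution of −Δu = f(u) in Ω and x is a point with ∇u(x) ≠ 0, then (Δ + f'(u))|∇u| = (|∇_T|∇u||² + |A|²|∇u|²)/|∇u| at x. -/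
open MeasureTheory
open scoped RealInnerProductSpace
open scoped Topology

noncomputable section

/-- Laplacian `Δf = ∑ᵢ ∂ᵢᵢf`. -/
def lap {n : ℕ} (f : EuclideanSpace ℝ (Fin n) → ℝ)
    (x : EuclideanSpace ℝ (Fin n)) : ℝ :=
  ∑ i : Fin n,
    fderiv ℝ (fun y => fderiv ℝ f y (EuclideanSpace.single i 1)) x
      (EuclideanSpace.single i 1)

/-- Unit normal `ν = ∇u/|∇u|` to the level sets of `u`. -/
def levelNormal {n : ℕ} (u : EuclideanSpace ℝ (Fin n) → ℝ)
    (x : EuclideanSpace ℝ (Fin n)) : EuclideanSpace ℝ (Fin n) :=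
  ‖gradient u x‖⁻¹ • gradient u x

/-- Tangential gradient `∇_T φ = ∇φ − (∇φ·ν)ν` along the level sets of `u`. -/
def tangGrad {n : ℕ} (u φ : EuclideanSpace ℝ (Fin n) → ℝ)
    (x : EuclideanSpace ℝ (Fin n)) : EuclideanSpace ℝ (Fin n) :=
  gradient φ x - ⟪gradient φ x, levelNormal u x⟫ • levelNormal u x

/-- Squared second fundamental form `|A|² = ∑_{i,j} (δᵢ νʲ)²` of the level sets
of `u`, where `δᵢ` is the tangential derivative. -/
def sffSq {n : ℕ} (u : EuclideanSpace ℝ (Fin n) → ℝ)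
    (x : EuclideanSpace ℝ (Fin n)) : ℝ :=
  ∑ i : Fin n, ∑ j : Fin n,
    (fderiv ℝ (fun y => levelNormal u y j) x (EuclideanSpace.single i 1)
      - (∑ k : Fin n, levelNormal u x k *
          fderiv ℝ (fun y => levelNormal u y j) x (EuclideanSpace.single k 1)) *
        levelNormal u x i) ^ 2

section Aux
variable {n : ℕ}
local notation "E" => EuclideanSpace ℝ (Fin n)

abbrev ee (i : Fin n) : EuclideanSpace ℝ (Fin n) := EuclideanSpace.single i 1

def u1 (u : E → ℝ) (j : Fin n) : E → ℝ := fun y => fderiv ℝ u y (ee j)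
def u2 (u : E → ℝ) (i j : Fin n) : E → ℝ := fun y => fderiv ℝ (u1 u j) y (ee i)
def SS (u : E → ℝ) : E → ℝ := fun y => ∑ j, (u1 u j y) ^ 2
def NN (u : E → ℝ) : E → ℝ := fun y => Real.sqrt (SS u y)
def BB (u : E → ℝ) (i : Fin n) : E → ℝ := fun y => ∑ j, u1 u j y * u2 u i j y

lemma pd_contDiff {g : E → ℝ} (hg : ContDiff ℝ (⊤ : ℕ∞) g) (v : E) :
    ContDiff ℝ (⊤ : ℕ∞) (fun y => fderiv ℝ g y v) :=
  (hg.fderiv_right (by simp)).clm_apply contDiff_const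

lemma u1_contDiff {u : E → ℝ} (hu : ContDiff ℝ (⊤ : ℕ∞) u) (j : Fin n) : ContDiff ℝ (⊤ : ℕ∞) (u1 u j) :=
  pd_contDiff hu _

lemma u2_contDiff {u : E → ℝ} (hu : ContDiff ℝ (⊤ : ℕ∞) u) (i j : Fin n) : ContDiff ℝ (⊤ : ℕ∞) (u2 u i j) :=
  pd_contDiff (u1_contDiff hu j) _

lemma SS_contDiff {u : E → ℝ} (hu : ContDiff ℝ (⊤ : ℕ∞) u) : ContDiff ℝ (⊤ : ℕ∞) (SS u) :=
  ContDiff.sum fun j _ => (u1_contDiff hu j).pow 2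

lemma BB_contDiff {u : E → ℝ} (hu : ContDiff ℝ (⊤ : ℕ∞) u) (i : Fin n) : ContDiff ℝ (⊤ : ℕ∞) (BB u i) :=
  ContDiff.sum fun j _ => (u1_contDiff hu j).mul (u2_contDiff hu i j)

lemma grad_coord (g : E → ℝ) (y : E) (i : Fin n) :
    gradient g y i = fderiv ℝ g y (ee i) := by
  have : fderiv ℝ g y (ee i) = ⟪gradient g y, ee i⟫ := by
    rw [gradient]
    simp [InnerProductSpace.toDual_symm_apply]
  rw [this, ee, EuclideanSpace.inner_single_right]
  simp

lemma norm_coord (v : EuclideanSpace ℝ (Fin n)) :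
    ‖v‖ = Real.sqrt (∑ i, (v i) ^ 2) := by
  rw [EuclideanSpace.norm_eq]
  congr 1
  exact Finset.sum_congr rfl fun i _ => by rw [Real.norm_eq_abs, sq_abs]

lemma normsq_coord (v : EuclideanSpace ℝ (Fin n)) : ‖v‖ ^ 2 = ∑ i, (v i) ^ 2 := by
  rw [norm_coord, Real.sq_sqrt (Finset.sum_nonneg fun i _ => sq_nonneg _)]

lemma inner_coord (a b : EuclideanSpace ℝ (Fin n)) : ⟪a, b⟫ = ∑ i, a i * b i := by
  simp [PiLp.inner_apply, RCLike.inner_apply, conj_trivial]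
  exact Finset.sum_congr rfl fun i _ => mul_comm _ _

lemma NN_eq_norm (u : E → ℝ) (y : E) : ‖gradient u y‖ = NN u y := by
  rw [norm_coord]
  congr 1
  exact Finset.sum_congr rfl fun i _ => by rw [grad_coord]; rfl

lemma symm_second {g : E → ℝ} (hg : ContDiff ℝ (⊤ : ℕ∞) g) (y v w : E) :
    fderiv ℝ (fun z => fderiv ℝ g z w) y v = fderiv ℝ (fun z => fderiv ℝ g z v) y w := by
  have hd : ∀ z, DifferentiableAt ℝ (fderiv ℝ g) z :=
    fun z => ((hg.fderiv_right (m := 1) (by exact WithTop.coe_le_coe.mpr le_top)).differentiable one_ne_zero) z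
  have hc : ∀ (a : E), fderiv ℝ (fun z => fderiv ℝ g z a) y
      = (fderiv ℝ (fderiv ℝ g) y).flip a := by
    intro a
    have := fderiv_clm_apply (hd y) (differentiableAt_const a)
    simpa using this
  rw [hc, hc]
  exact second_derivative_symmetric
    (fun z => (hg.differentiable (by simp) z).hasFDerivAt)
    (hd y).hasFDerivAt v w

lemma u2_symm {u : E → ℝ} (hu : ContDiff ℝ (⊤ : ℕ∞) u) (i j : Fin n) : u2 u i j = u2 u j i :=
  funext fun z => symm_second hu z (ee i) (ee j)

lemma hasFDerivAt_SS {u : E → ℝ} (hu : ContDiff ℝ (⊤ : ℕ∞) u) (y : E) :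
    HasFDerivAt (SS u) (∑ j, (2 * u1 u j y) • fderiv ℝ (u1 u j) y) y := by
  have h : ∀ j ∈ Finset.univ, HasFDerivAt (fun z => u1 u j z * u1 u j z)
      ((2 * u1 u j y) • fderiv ℝ (u1 u j) y) y := by
    intro j _
    have hd := ((u1_contDiff hu j).differentiable (by simp) y).hasFDerivAt
    have h2 := hd.fun_mul hd
    rw [two_mul, add_smul]
    exact h2
  have h3 := HasFDerivAt.fun_sum h
  have hfun : SS u = fun z => ∑ j, u1 u j z * u1 u j z :=
    funext fun z => Finset.sum_congr rfl fun j _ => sq (u1 u j z)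
  rw [hfun]
  exact h3

lemma fderiv_SS_apply {u : E → ℝ} (hu : ContDiff ℝ (⊤ : ℕ∞) u) (y : E) (i : Fin n) :
    fderiv ℝ (SS u) y (ee i) = ∑ j, 2 * (u1 u j y * u2 u i j y) := by
  rw [(hasFDerivAt_SS hu y).fderiv]
  rw [ContinuousLinearMap.sum_apply]
  exact Finset.sum_congr rfl fun j _ => by
    rw [ContinuousLinearMap.smul_apply]
    simp [u2, mul_assoc]

lemma hasFDerivAt_NN {u : E → ℝ} (hu : ContDiff ℝ (⊤ : ℕ∞) u) {y : E} (hy : 0 < SS u y) :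
    HasFDerivAt (NN u) ((1 / (2 * Real.sqrt (SS u y))) • fderiv ℝ (SS u) y) y := by
  have hSd := ((SS_contDiff hu).differentiable (by simp) y).hasFDerivAt
  exact (Real.hasDerivAt_sqrt hy.ne').comp_hasFDerivAt y hSd

lemma fderiv_NN_apply {u : E → ℝ} (hu : ContDiff ℝ (⊤ : ℕ∞) u) {y : E} (hy : 0 < SS u y) (i : Fin n) :
    fderiv ℝ (NN u) y (ee i) = (NN u y)⁻¹ * BB u i y := by
  have hNne : Real.sqrt (SS u y) ≠ 0 := (Real.sqrt_pos.mpr hy).ne'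
  rw [(hasFDerivAt_NN hu hy).fderiv, ContinuousLinearMap.smul_apply, smul_eq_mul,
    fderiv_SS_apply hu, BB, Finset.mul_sum, Finset.mul_sum]
  refine Finset.sum_congr rfl fun j _ => ?_
  show 1 / (2 * Real.sqrt (SS u y)) * (2 * (u1 u j y * u2 u i j y))
      = (Real.sqrt (SS u y))⁻¹ * (u1 u j y * u2 u i j y)
  field_simp

lemma fderiv_inv_mul {u g : E → ℝ} (hu : ContDiff ℝ (⊤ : ℕ∞) u) (hg : ContDiff ℝ (⊤ : ℕ∞) g)
    {y : E} (hy : 0 < SS u y) (i : Fin n) :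
    fderiv ℝ (fun z => (NN u z)⁻¹ * g z) y (ee i)
      = (NN u y)⁻¹ * fderiv ℝ g y (ee i) - (NN u y)⁻¹ ^ 3 * BB u i y * g y := by
  have hNpos : 0 < NN u y := Real.sqrt_pos.mpr hy
  have hNN := (hasFDerivAt_NN hu hy)
  have hinv : HasFDerivAt (fun z => (NN u z)⁻¹)
      ((-(NN u y ^ 2)⁻¹) • ((1 / (2 * Real.sqrt (SS u y))) • fderiv ℝ (SS u) y)) y :=
    (hasDerivAt_inv hNpos.ne').comp_hasFDerivAt y hNN
  have hgd := ((hg.differentiable (by simp)) y).hasFDerivAt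
  have hmul := hinv.fun_mul hgd
  rw [hmul.fderiv]
  rw [ContinuousLinearMap.add_apply, ContinuousLinearMap.smul_apply,
    ContinuousLinearMap.smul_apply, ContinuousLinearMap.smul_apply]
  have hFN : ((1 / (2 * Real.sqrt (SS u y))) • fderiv ℝ (SS u) y) (ee i)
      = (NN u y)⁻¹ * BB u i y := by
    rw [← (hasFDerivAt_NN hu hy).fderiv]
    exact fderiv_NN_apply hu hy i
  rw [hFN]
  simp only [smul_eq_mul]
  have h3 : (NN u y)⁻¹ ^ 3 = (NN u y ^ 2)⁻¹ * (NN u y)⁻¹ := by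
    rw [← inv_pow]; ring
  rw [h3]
  ring

lemma fderiv_BB_apply {u : E → ℝ} (hu : ContDiff ℝ (⊤ : ℕ∞) u) (i : Fin n) (y : E) (k : Fin n) :
    fderiv ℝ (BB u i) y (ee k)
      = ∑ j, (u1 u j y * fderiv ℝ (u2 u i j) y (ee k) + u2 u i j y * u2 u k j y) := by
  have h : ∀ j ∈ Finset.univ, HasFDerivAt (fun z => u1 u j z * u2 u i j z)
      (u1 u j y • fderiv ℝ (u2 u i j) y + u2 u i j y • fderiv ℝ (u1 u j) y) y :=
    fun j _ => (((u1_contDiff hu j).differentiable (by simp) y).hasFDerivAt).mul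
      (((u2_contDiff hu i j).differentiable (by simp) y).hasFDerivAt)
  have h2 : HasFDerivAt (BB u i)
      (∑ j, (u1 u j y • fderiv ℝ (u2 u i j) y + u2 u i j y • fderiv ℝ (u1 u j) y)) y :=
    HasFDerivAt.fun_sum h
  rw [h2.fderiv, ContinuousLinearMap.sum_apply]
  exact Finset.sum_congr rfl fun j _ => by
    rw [ContinuousLinearMap.add_apply, ContinuousLinearMap.smul_apply,
      ContinuousLinearMap.smul_apply]
    simp [u2, smul_eq_mul]

lemma sum_split {m : ℕ} (a b c d e f : Fin m → ℝ) :
    ∑ j, (a j + b j + c j - d j - e j + f j)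
      = ∑ j, a j + ∑ j, b j + ∑ j, c j - ∑ j, d j - ∑ j, e j + ∑ j, f j := by
  simp [Finset.sum_add_distrib, Finset.sum_sub_distrib]

lemma sum_split3 {m : ℕ} (a b c : Fin m → ℝ) :
    ∑ j, (a j + b j - c j) = ∑ j, a j + ∑ j, b j - ∑ j, c j := by
  simp [Finset.sum_add_distrib, Finset.sum_sub_distrib]

end Aux
lemma key_algebra {n : ℕ} (U B t : Fin n → ℝ) (H D M : Fin n → Fin n → ℝ) (N : ℝ)
    (hN : 0 < N)
    (hN2 : N ^ 2 = ∑ j, U j ^ 2)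
    (Hsymm : ∀ i j, H i j = H j i)
    (hB : ∀ i, B i = ∑ j, U j * H i j)
    (hD : ∀ i j, D i j = N⁻¹ * H i j - N⁻¹ ^ 3 * B i * U j)
    (ht : ∀ j, t j = N⁻¹ * B j - (∑ k, (N⁻¹ * B k) * (N⁻¹ * U k)) * (N⁻¹ * U j))
    (hM : ∀ i j, M i j = D i j - (∑ k, (N⁻¹ * U k) * D k j) * (N⁻¹ * U i)) :
    N⁻¹ * (∑ i, ∑ j, H i j ^ 2) - N⁻¹ ^ 3 * (∑ i, B i ^ 2)
      = ((∑ j, t j ^ 2) + (∑ i, ∑ j, M i j ^ 2) * N ^ 2) / N := by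
  have hN0 : N ≠ 0 := hN.ne'
  set c : ℝ := ∑ k, U k * B k with hc
  have ht' : ∀ j, t j = N⁻¹ * B j - N⁻¹ ^ 3 * c * U j := by
    intro j
    rw [ht]
    have : (∑ k, (N⁻¹ * B k) * (N⁻¹ * U k)) = N⁻¹ ^ 2 * c := by
      rw [hc, Finset.mul_sum]
      exact Finset.sum_congr rfl fun k _ => by ring
    rw [this]; ring
  have hBU : ∀ j, ∑ k, U k * H k j = B j := by
    intro j
    rw [hB]
    exact Finset.sum_congr rfl fun k _ => by rw [Hsymm]
  have hB' : ∀ i, ∑ j, H i j * U j = B i := by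
    intro i
    rw [hB]
    exact Finset.sum_congr rfl fun j _ => by ring
  have F1 : ∑ j, U j * t j = 0 := by
    have : ∀ j, U j * t j = N⁻¹ * (U j * B j) - N⁻¹ ^ 3 * c * U j ^ 2 := by
      intro j; rw [ht']; ring
    rw [Finset.sum_congr rfl fun j _ => this j, Finset.sum_sub_distrib, ← Finset.mul_sum,
      ← Finset.mul_sum, ← hc, ← hN2]
    field_simp
    ring
  have F2 : ∑ j, t j * B j = N * ∑ j, t j ^ 2 := by
    have hBt : ∀ j, B j = N * t j + N⁻¹ ^ 2 * c * U j := by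
      intro j
      rw [ht']
      field_simp
      ring
    have : ∀ j, t j * B j = N * t j ^ 2 + N⁻¹ ^ 2 * c * (U j * t j) := by
      intro j; rw [hBt]; ring
    rw [Finset.sum_congr rfl fun j _ => this j, Finset.sum_add_distrib, ← Finset.mul_sum,
      ← Finset.mul_sum, F1]
    ring
  have hMin : ∀ j, (∑ k, (N⁻¹ * U k) * D k j) = N⁻¹ * t j := by
    intro j
    have : ∀ k, (N⁻¹ * U k) * D k j
        = N⁻¹ ^ 2 * (U k * H k j) - N⁻¹ ^ 4 * U j * (U k * B k) := by
      intro k; rw [hD]; ring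
    rw [Finset.sum_congr rfl fun k _ => this k, Finset.sum_sub_distrib, ← Finset.mul_sum,
      ← Finset.mul_sum, hBU, ← hc, ht']
    ring
  have hM' : ∀ i j, M i j ^ 2
      = N⁻¹ ^ 2 * (H i j - N⁻¹ ^ 2 * B i * U j - N⁻¹ * t j * U i) ^ 2 := by
    intro i j
    rw [hM, hMin, hD]
    ring
  -- the six double sums
  have hDS2 : ∑ i, ∑ j, N⁻¹ ^ 4 * B i ^ 2 * U j ^ 2 = N⁻¹ ^ 2 * ∑ i, B i ^ 2 := by
    have h1 : ∀ i, ∑ j, N⁻¹ ^ 4 * B i ^ 2 * U j ^ 2 = N⁻¹ ^ 2 * B i ^ 2 := by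
      intro i
      rw [← Finset.mul_sum, ← hN2]
      field_simp
    rw [Finset.sum_congr rfl fun i _ => h1 i, ← Finset.mul_sum]
  have hDS3 : ∑ i, ∑ j, N⁻¹ ^ 2 * (t j ^ 2 * U i ^ 2) = ∑ j, t j ^ 2 := by
    rw [Finset.sum_comm]
    have h1 : ∀ j, ∑ i, N⁻¹ ^ 2 * (t j ^ 2 * U i ^ 2) = t j ^ 2 := by
      intro j
      calc ∑ i, N⁻¹ ^ 2 * (t j ^ 2 * U i ^ 2)
          = ∑ i, (N⁻¹ ^ 2 * t j ^ 2) * U i ^ 2 :=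
            Finset.sum_congr rfl fun i _ => by ring
        _ = (N⁻¹ ^ 2 * t j ^ 2) * N ^ 2 := by rw [← Finset.mul_sum, ← hN2]
        _ = t j ^ 2 := by field_simp
    exact Finset.sum_congr rfl fun j _ => h1 j
  have hDS4 : ∑ i, ∑ j, 2 * N⁻¹ ^ 2 * (B i * (H i j * U j))
      = 2 * N⁻¹ ^ 2 * ∑ i, B i ^ 2 := by
    have h1 : ∀ i, ∑ j, 2 * N⁻¹ ^ 2 * (B i * (H i j * U j)) = 2 * N⁻¹ ^ 2 * B i ^ 2 := by
      intro i
      rw [← Finset.mul_sum, ← Finset.mul_sum, hB']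
      ring
    rw [Finset.sum_congr rfl fun i _ => h1 i, ← Finset.mul_sum]
  have hDS5 : ∑ i, ∑ j, 2 * N⁻¹ * (t j * (U i * H i j)) = 2 * ∑ j, t j ^ 2 := by
    rw [Finset.sum_comm]
    have h1 : ∀ j, ∑ i, 2 * N⁻¹ * (t j * (U i * H i j)) = (2 * N⁻¹) * (t j * B j) := by
      intro j
      calc ∑ i, 2 * N⁻¹ * (t j * (U i * H i j))
          = ∑ i, (2 * N⁻¹ * t j) * (U i * H i j) := Finset.sum_congr rfl fun i _ => by ring
        _ = (2 * N⁻¹ * t j) * ∑ i, U i * H i j := by rw [Finset.mul_sum]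
        _ = (2 * N⁻¹) * (t j * B j) := by rw [hBU]; ring
    rw [Finset.sum_congr rfl fun j _ => h1 j, ← Finset.mul_sum, F2]
    field_simp
  have hDS6 : ∑ i, ∑ j, 2 * N⁻¹ ^ 3 * (U i * B i * (U j * t j)) = 0 := by
    have h1 : ∀ i, ∑ j, 2 * N⁻¹ ^ 3 * (U i * B i * (U j * t j))
        = (2 * N⁻¹ ^ 3 * (U i * B i)) * ∑ j, U j * t j := by
      intro i
      rw [Finset.mul_sum]
      exact Finset.sum_congr rfl fun j _ => by ring
    rw [Finset.sum_congr rfl fun i _ => h1 i]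
    simp [F1]
  have expand : ∀ i j, (H i j - N⁻¹ ^ 2 * B i * U j - N⁻¹ * t j * U i) ^ 2
      = H i j ^ 2 + N⁻¹ ^ 4 * B i ^ 2 * U j ^ 2 + N⁻¹ ^ 2 * (t j ^ 2 * U i ^ 2)
        - 2 * N⁻¹ ^ 2 * (B i * (H i j * U j)) - 2 * N⁻¹ * (t j * (U i * H i j))
        + 2 * N⁻¹ ^ 3 * (U i * B i * (U j * t j)) := by
    intros; ring
  have E0 : ∑ i, ∑ j, (H i j - N⁻¹ ^ 2 * B i * U j - N⁻¹ * t j * U i) ^ 2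
      = (∑ i, ∑ j, H i j ^ 2) - N⁻¹ ^ 2 * (∑ i, B i ^ 2) - ∑ j, t j ^ 2 := by
    calc ∑ i, ∑ j, (H i j - N⁻¹ ^ 2 * B i * U j - N⁻¹ * t j * U i) ^ 2
        = ∑ i, (∑ j, H i j ^ 2 + ∑ j, N⁻¹ ^ 4 * B i ^ 2 * U j ^ 2
            + ∑ j, N⁻¹ ^ 2 * (t j ^ 2 * U i ^ 2)
            - ∑ j, 2 * N⁻¹ ^ 2 * (B i * (H i j * U j))
            - ∑ j, 2 * N⁻¹ * (t j * (U i * H i j))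
            + ∑ j, 2 * N⁻¹ ^ 3 * (U i * B i * (U j * t j))) := by
          refine Finset.sum_congr rfl fun i _ => ?_
          rw [Finset.sum_congr rfl fun j _ => expand i j, sum_split]
      _ = (∑ i, ∑ j, H i j ^ 2) + (∑ i, ∑ j, N⁻¹ ^ 4 * B i ^ 2 * U j ^ 2)
            + (∑ i, ∑ j, N⁻¹ ^ 2 * (t j ^ 2 * U i ^ 2))
            - (∑ i, ∑ j, 2 * N⁻¹ ^ 2 * (B i * (H i j * U j)))
            - (∑ i, ∑ j, 2 * N⁻¹ * (t j * (U i * H i j)))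
            + (∑ i, ∑ j, 2 * N⁻¹ ^ 3 * (U i * B i * (U j * t j))) := sum_split _ _ _ _ _ _
      _ = (∑ i, ∑ j, H i j ^ 2) - N⁻¹ ^ 2 * (∑ i, B i ^ 2) - ∑ j, t j ^ 2 := by
          rw [hDS2, hDS3, hDS4, hDS5, hDS6]
          ring
  have E1 : ∑ i, ∑ j, M i j ^ 2
      = N⁻¹ ^ 2 * ((∑ i, ∑ j, H i j ^ 2) - N⁻¹ ^ 2 * (∑ i, B i ^ 2) - ∑ j, t j ^ 2) := by
    calc ∑ i, ∑ j, M i j ^ 2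
        = ∑ i, ∑ j, N⁻¹ ^ 2 * (H i j - N⁻¹ ^ 2 * B i * U j - N⁻¹ * t j * U i) ^ 2 :=
          Finset.sum_congr rfl fun i _ => Finset.sum_congr rfl fun j _ => hM' i j
      _ = ∑ i, N⁻¹ ^ 2 * ∑ j, (H i j - N⁻¹ ^ 2 * B i * U j - N⁻¹ * t j * U i) ^ 2 :=
          Finset.sum_congr rfl fun i _ => by rw [← Finset.mul_sum]
      _ = N⁻¹ ^ 2 * ∑ i, ∑ j, (H i j - N⁻¹ ^ 2 * B i * U j - N⁻¹ * t j * U i) ^ 2 := by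
          rw [← Finset.mul_sum]
      _ = _ := by rw [E0]
  rw [E1]
  field_simp
  ring

/-- Key identity: if `u` is a smooth solution of `−Δu = f(u)` and `∇u(x) ≠ 0`,
then `(Δ + f'(u))|∇u| = (|∇_T|∇u||² + |A|²|∇u|²)/|∇u|` at `x`. -/
theorem gradient_norm_identity (n : ℕ)
    (Ω : Set (EuclideanSpace ℝ (Fin n))) (hΩo : IsOpen Ω)
    (f : ℝ → ℝ) (hf : ContDiff ℝ 1 f)
    (u : EuclideanSpace ℝ (Fin n) → ℝ) (hu : ContDiff ℝ (⊤ : ℕ∞) u)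
    (hsol : ∀ y ∈ Ω, -(lap u y) = f (u y))
    (x : EuclideanSpace ℝ (Fin n)) (hx : x ∈ Ω) (h0 : gradient u x ≠ 0) :
    lap (fun y => ‖gradient u y‖) x + deriv f (u x) * ‖gradient u x‖
      = (‖tangGrad u (fun y => ‖gradient u y‖) x‖ ^ 2
          + sffSq u x * ‖gradient u x‖ ^ 2) / ‖gradient u x‖ := by
  classical
  have hS0 : 0 < SS u x := by
    have hg0 : 0 < ‖gradient u x‖ := norm_pos_iff.mpr h0
    rw [NN_eq_norm] at hg0
    exact Real.sqrt_pos.mp hg0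
  have hNpos : 0 < NN u x := Real.sqrt_pos.mpr hS0
  have hN0 : NN u x ≠ 0 := hNpos.ne'
  have hN2 : NN u x ^ 2 = ∑ j, u1 u j x ^ 2 := Real.sq_sqrt hS0.le
  have hev : ∀ᶠ y in 𝓝 x, 0 < SS u y := by
    have hc : ContinuousAt (SS u) x := (SS_contDiff hu).continuous.continuousAt
    have hmem := hc.preimage_mem_nhds (Ioi_mem_nhds hS0)
    exact Filter.eventually_of_mem hmem fun y hy => hy
  have hφ : (fun y => ‖gradient u y‖) = NN u := funext fun y => NN_eq_norm u y
  -- third derivatives through the PDE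
  have hthird : ∀ j, ∑ i, fderiv ℝ (u2 u i j) x (ee i) = -(deriv f (u x) * u1 u j x) := by
    intro j
    have step1 : ∀ i, fderiv ℝ (u2 u i j) x (ee i) = fderiv ℝ (u2 u i i) x (ee j) := by
      intro i
      rw [u2_symm hu i j]
      exact symm_second (u1_contDiff hu i) x (ee i) (ee j)
    have step2 : ∑ i, fderiv ℝ (u2 u i i) x (ee j) = fderiv ℝ (lap u) x (ee j) := by
      have hdiff : ∀ i ∈ Finset.univ, DifferentiableAt ℝ (u2 u i i) x :=
        fun i _ => ((u2_contDiff hu i i).differentiable (by simp) x)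
      have hfd : fderiv ℝ (fun z => ∑ i, u2 u i i z) x = ∑ i, fderiv ℝ (u2 u i i) x :=
        fderiv_fun_sum hdiff
      have hlapu : (fun z => ∑ i, u2 u i i z) = lap u := rfl
      rw [← hlapu, hfd, ContinuousLinearMap.sum_apply]
    have step3 : fderiv ℝ (lap u) x = fderiv ℝ (fun z => -(f (u z))) x := by
      apply Filter.EventuallyEq.fderiv_eq
      filter_upwards [hΩo.mem_nhds hx] with y hy
      show lap u y = -(f (u y))
      rw [← hsol y hy, neg_neg]
    have step4 : fderiv ℝ (fun z => -(f (u z))) x (ee j) = -(deriv f (u x) * u1 u j x) := by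
      have hcomp : HasFDerivAt (fun z => f (u z)) (deriv f (u x) • fderiv ℝ u x) x :=
        HasDerivAt.comp_hasFDerivAt x (((hf.differentiable one_ne_zero) (u x)).hasDerivAt)
          ((hu.differentiable (by simp) x).hasFDerivAt)
      rw [hcomp.fun_neg.fderiv, ContinuousLinearMap.neg_apply, ContinuousLinearMap.smul_apply,
        smul_eq_mul]
      rfl
    calc ∑ i, fderiv ℝ (u2 u i j) x (ee i)
        = ∑ i, fderiv ℝ (u2 u i i) x (ee j) := Finset.sum_congr rfl fun i _ => step1 i
      _ = fderiv ℝ (lap u) x (ee j) := step2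
      _ = -(deriv f (u x) * u1 u j x) := by rw [step3]; exact step4
  -- the laplacian of NN
  have hGW : ∀ i : Fin n, fderiv ℝ (fun y => fderiv ℝ (NN u) y (ee i)) x
      = fderiv ℝ (fun y => (NN u y)⁻¹ * BB u i y) x := by
    intro i
    apply Filter.EventuallyEq.fderiv_eq
    filter_upwards [hev] with y hy
    exact fderiv_NN_apply hu hy i
  have hGi : ∀ i, fderiv ℝ (fun y => fderiv ℝ (NN u) y (ee i)) x (ee i)
      = (NN u x)⁻¹ * (∑ j, (u1 u j x * fderiv ℝ (u2 u i j) x (ee i) + u2 u i j x * u2 u i j x))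
        - (NN u x)⁻¹ ^ 3 * BB u i x * BB u i x := by
    intro i
    rw [hGW i, fderiv_inv_mul hu (BB_contDiff hu i) hS0 i, fderiv_BB_apply hu i x i]
  have hA : ∑ i, ∑ j, u1 u j x * fderiv ℝ (u2 u i j) x (ee i)
      = -(deriv f (u x) * NN u x ^ 2) := by
    rw [Finset.sum_comm]
    have h1 : ∀ j, ∑ i, u1 u j x * fderiv ℝ (u2 u i j) x (ee i)
        = -(deriv f (u x) * u1 u j x ^ 2) := by
      intro j
      rw [← Finset.mul_sum, hthird j]
      ring
    calc ∑ j, ∑ i, u1 u j x * fderiv ℝ (u2 u i j) x (ee i)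
        = ∑ j, -(deriv f (u x) * u1 u j x ^ 2) := Finset.sum_congr rfl fun j _ => h1 j
      _ = -(∑ j, deriv f (u x) * u1 u j x ^ 2) := by rw [Finset.sum_neg_distrib]
      _ = -(deriv f (u x) * ∑ j, u1 u j x ^ 2) := by rw [← Finset.mul_sum]
      _ = -(deriv f (u x) * NN u x ^ 2) := by rw [← hN2]
  have hlap : lap (NN u) x + deriv f (u x) * NN u x
      = (NN u x)⁻¹ * (∑ i, ∑ j, u2 u i j x ^ 2)
        - (NN u x)⁻¹ ^ 3 * (∑ i, BB u i x ^ 2) := by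
    have e1 : lap (NN u) x
        = ∑ i, ((NN u x)⁻¹ * (∑ j, (u1 u j x * fderiv ℝ (u2 u i j) x (ee i)
            + u2 u i j x * u2 u i j x))
          - (NN u x)⁻¹ ^ 3 * BB u i x * BB u i x) :=
      Finset.sum_congr rfl fun i _ => hGi i
    have e2 : ∀ i, (NN u x)⁻¹ * (∑ j, (u1 u j x * fderiv ℝ (u2 u i j) x (ee i)
            + u2 u i j x * u2 u i j x)) - (NN u x)⁻¹ ^ 3 * BB u i x * BB u i x
        = (NN u x)⁻¹ * (∑ j, u1 u j x * fderiv ℝ (u2 u i j) x (ee i))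
          + (NN u x)⁻¹ * (∑ j, u2 u i j x ^ 2) - (NN u x)⁻¹ ^ 3 * BB u i x ^ 2 := by
      intro i
      rw [Finset.sum_add_distrib,
        show (∑ j, u2 u i j x * u2 u i j x) = ∑ j, u2 u i j x ^ 2 from
          Finset.sum_congr rfl fun j _ => (sq (u2 u i j x)).symm]
      ring
    rw [e1, Finset.sum_congr rfl fun i _ => e2 i, sum_split3, ← Finset.mul_sum,
      ← Finset.mul_sum, ← Finset.mul_sum, hA]
    field_simp
    ring
  -- coordinates of the normal and its derivatives
  have hν : ∀ (y : EuclideanSpace ℝ (Fin n)) (j : Fin n),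
      levelNormal u y j = (NN u y)⁻¹ * u1 u j y := by
    intro y j
    show (‖gradient u y‖⁻¹ • gradient u y) j = _
    rw [PiLp.smul_apply, smul_eq_mul, NN_eq_norm, grad_coord]
    rfl
  have hDν : ∀ i j, fderiv ℝ (fun y => levelNormal u y j) x (ee i)
      = (NN u x)⁻¹ * u2 u i j x - (NN u x)⁻¹ ^ 3 * BB u i x * u1 u j x := by
    intro i j
    have hfun : (fun y => levelNormal u y j) = fun y => (NN u y)⁻¹ * u1 u j y :=
      funext fun y => hν y j
    rw [hfun]
    exact fderiv_inv_mul hu (u1_contDiff hu j) hS0 i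
  have hgradφ : ∀ k, gradient (fun y => ‖gradient u y‖) x k = (NN u x)⁻¹ * BB u k x := by
    intro k
    rw [grad_coord, hφ]
    exact fderiv_NN_apply hu hS0 k
  have htg : ∀ j, tangGrad u (fun y => ‖gradient u y‖) x j
      = (NN u x)⁻¹ * BB u j x
        - (∑ k, ((NN u x)⁻¹ * BB u k x) * ((NN u x)⁻¹ * u1 u k x)) * ((NN u x)⁻¹ * u1 u j x) := by
    intro j
    show (gradient (fun y => ‖gradient u y‖) x
        - ⟪gradient (fun y => ‖gradient u y‖) x, levelNormal u x⟫ • levelNormal u x) j = _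
    rw [PiLp.sub_apply, PiLp.smul_apply, smul_eq_mul, hgradφ j, hν x j, inner_coord]
    congr 2
    exact Finset.sum_congr rfl fun k _ => by rw [hgradφ k, hν x k]
  have hnorm_tg : ‖tangGrad u (fun y => ‖gradient u y‖) x‖ ^ 2
      = ∑ j, (tangGrad u (fun y => ‖gradient u y‖) x j) ^ 2 := normsq_coord _
  have hsff : sffSq u x = ∑ i, ∑ j,
      (((NN u x)⁻¹ * u2 u i j x - (NN u x)⁻¹ ^ 3 * BB u i x * u1 u j x)
        - (∑ k, ((NN u x)⁻¹ * u1 u k x)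
            * ((NN u x)⁻¹ * u2 u k j x - (NN u x)⁻¹ ^ 3 * BB u k x * u1 u j x))
          * ((NN u x)⁻¹ * u1 u i x)) ^ 2 := by
    show (∑ i, ∑ j, (fderiv ℝ (fun y => levelNormal u y j) x (ee i)
      - (∑ k, levelNormal u x k * fderiv ℝ (fun y => levelNormal u y j) x (ee k))
        * levelNormal u x i) ^ 2) = _
    refine Finset.sum_congr rfl fun i _ => Finset.sum_congr rfl fun j _ => ?_
    rw [hDν i j, hν x i,
      Finset.sum_congr rfl fun k (_ : k ∈ Finset.univ) => by rw [hν x k, hDν k j]]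
  -- the algebraic identity
  have halg : (NN u x)⁻¹ * (∑ i, ∑ j, u2 u i j x ^ 2)
        - (NN u x)⁻¹ ^ 3 * (∑ i, BB u i x ^ 2)
      = ((∑ j, (tangGrad u (fun y => ‖gradient u y‖) x j) ^ 2)
          + (∑ i, ∑ j,
            (((NN u x)⁻¹ * u2 u i j x - (NN u x)⁻¹ ^ 3 * BB u i x * u1 u j x)
              - (∑ k, ((NN u x)⁻¹ * u1 u k x)
                  * ((NN u x)⁻¹ * u2 u k j x - (NN u x)⁻¹ ^ 3 * BB u k x * u1 u j x))
                * ((NN u x)⁻¹ * u1 u i x)) ^ 2) * NN u x ^ 2) / NN u x :=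
    key_algebra (fun j => u1 u j x) (fun i => BB u i x)
      (fun j => tangGrad u (fun y => ‖gradient u y‖) x j)
      (fun i j => u2 u i j x)
      (fun i j => (NN u x)⁻¹ * u2 u i j x - (NN u x)⁻¹ ^ 3 * BB u i x * u1 u j x)
      (fun i j => ((NN u x)⁻¹ * u2 u i j x - (NN u x)⁻¹ ^ 3 * BB u i x * u1 u j x)
        - (∑ k, ((NN u x)⁻¹ * u1 u k x)
            * ((NN u x)⁻¹ * u2 u k j x - (NN u x)⁻¹ ^ 3 * BB u k x * u1 u j x))
          * ((NN u x)⁻¹ * u1 u i x))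
      (NN u x) hNpos hN2
      (fun i j => congrFun (u2_symm hu i j) x)
      (fun i => rfl) (fun i j => rfl) htg (fun i j => rfl)
  calc lap (fun y => ‖gradient u y‖) x + deriv f (u x) * ‖gradient u x‖
      = lap (NN u) x + deriv f (u x) * NN u x := by rw [hφ, NN_eq_norm]
    _ = (NN u x)⁻¹ * (∑ i, ∑ j, u2 u i j x ^ 2)
        - (NN u x)⁻¹ ^ 3 * (∑ i, BB u i x ^ 2) := hlap
    _ = ((∑ j, (tangGrad u (fun y => ‖gradient u y‖) x j) ^ 2)
          + (∑ i, ∑ j,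
            (((NN u x)⁻¹ * u2 u i j x - (NN u x)⁻¹ ^ 3 * BB u i x * u1 u j x)
              - (∑ k, ((NN u x)⁻¹ * u1 u k x)
                  * ((NN u x)⁻¹ * u2 u k j x - (NN u x)⁻¹ ^ 3 * BB u k x * u1 u j x))
                * ((NN u x)⁻¹ * u1 u i x)) ^ 2) * NN u x ^ 2) / NN u x := halg
    _ = (‖tangGrad u (fun y => ‖gradient u y‖) x‖ ^ 2
          + sffSq u x * ‖gradient u x‖ ^ 2) / ‖gradient u x‖ := by
        rw [hnorm_tg, hsff, NN_eq_norm]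


end
end
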